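/- arXiv:1705.08886 — 5 statements merged into one kernel-verified Lean document; each statement's English description precedes it below -/
import Mathlib

section
/- Let (X,d) be a metric space and K : X → ℝ a continuous nonnegative function. For p ∈ X define the K-scale r_K(p) := sup{ r > 0 : K(y) ≤ r⁻² for every y ∈ X with d(p,y) < r } ∈ (0,∞]. Then exactly one of the following holds: either K ≡ 0 on X (and then r_K(p) = ∞ for every p), or r_K(p) is finite and positive for every p ∈ X and r_K is 1-Lipschitz, i.e. |r_K(p) − r_K(q)| ≤ d(p,q) for all p, q ∈ X. -/
/-!
A radius `r` is admissible at `q` as soon as `r + d(p, q)` is admissible at `p`, because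
`B(q, r) ⊆ B(p, r + d(p, q))` and `(r + d)⁻² ≤ r⁻²`; taking suprema gives
`r_K(p) ≤ r_K(q) + d(p, q)`, which is the Lipschitz bound once the scales are finite.
They are finite as soon as `K(x) > 0` somewhere, since an admissible `r > d(p, x)` must satisfy
`r ≤ K(x)^(-1/2)`, and they are positive because `K` is bounded above near every point.
-/

open Metric
open scoped ENNReal

/-- The `K`-scale of a point `p`: the supremum (in `ℝ≥0∞`) of all radii `r > 0`
such that `K ≤ r⁻²` on the open ball `B(p,r)`. -/
noncomputable def scaleK {X : Type*} [MetricSpace X] (K : X → ℝ) (p : X) : ℝ≥0∞ :=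
  ⨆ (r : ℝ) (_ : 0 < r ∧ ∀ y : X, dist p y < r → K y ≤ (r ^ 2)⁻¹), ENNReal.ofReal r

open Filter Topology

section

variable {X : Type*} [MetricSpace X] (K : X → ℝ)

lemma ofReal_le_scaleK {p : X} {r : ℝ}
    (h : 0 < r ∧ ∀ y : X, dist p y < r → K y ≤ (r ^ 2)⁻¹) :
    ENNReal.ofReal r ≤ scaleK K p :=
  le_iSup₂_of_le r h le_rfl

lemma scaleK_le_ofReal {p : X} {M : ℝ}
    (h : ∀ r : ℝ, 0 < r → (∀ y : X, dist p y < r → K y ≤ (r ^ 2)⁻¹) → r ≤ M) :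
    scaleK K p ≤ ENNReal.ofReal M :=
  iSup₂_le fun r hr => ENNReal.ofReal_le_ofReal (h r hr.1 hr.2)

lemma scaleK_eq_top_of_nonpos (hK : ∀ x, K x ≤ 0) (p : X) : scaleK K p = ⊤ := by
  refine ENNReal.eq_top_of_forall_nnreal_le fun n => ?_
  have hadm : 0 < (n : ℝ) + 1 ∧ ∀ y : X, dist p y < n + 1 → K y ≤ (((n : ℝ) + 1) ^ 2)⁻¹ :=
    ⟨by positivity, fun y _ => (hK y).trans (by positivity)⟩
  calc (n : ℝ≥0∞) = ENNReal.ofReal n := by simp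
    _ ≤ ENNReal.ofReal (n + 1) := ENNReal.ofReal_le_ofReal (by linarith)
    _ ≤ scaleK K p := ofReal_le_scaleK K hadm

lemma scaleK_pos {p : X} (hK : UpperSemicontinuousAt K p) : 0 < scaleK K p := by
  obtain ⟨ε, hε, hball⟩ := Metric.eventually_nhds_iff.mp (hK (K p + 1) (by linarith))
  have hsmall : ∀ᶠ r in 𝓝[>] (0 : ℝ), r < ε := nhdsWithin_le_nhds (eventually_lt_nhds hε)
  have hlarge : ∀ᶠ r in 𝓝[>] (0 : ℝ), K p + 1 ≤ (r⁻¹) ^ 2 :=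
    ((tendsto_pow_atTop two_ne_zero).comp tendsto_inv_nhdsGT_zero).eventually_ge_atTop _
  obtain ⟨r, hr0, hrε, hrK⟩ := (eventually_mem_nhdsWithin.and (hsmall.and hlarge)).exists
  have hadm : 0 < r ∧ ∀ y : X, dist p y < r → K y ≤ (r ^ 2)⁻¹ := by
    refine ⟨hr0, fun y hy => ?_⟩
    have hKy : K y < K p + 1 := hball (by rw [dist_comm]; exact hy.trans hrε)
    rw [← inv_pow]
    linarith
  exact (ENNReal.ofReal_pos.mpr hr0).trans_le (ofReal_le_scaleK K hadm)

lemma scaleK_lt_top {x : X} (hx : 0 < K x) (p : X) : scaleK K p < ⊤ := by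
  refine (scaleK_le_ofReal K (M := max (dist p x) √(K x)⁻¹) fun r hr hball => ?_).trans_lt
    ENNReal.ofReal_lt_top
  rcases le_or_gt r (dist p x) with hrx | hxr
  · exact le_max_of_le_left hrx
  · have hr2 : r ^ 2 ≤ (K x)⁻¹ := (le_inv_comm₀ hx (by positivity)).mp (hball x hxr)
    exact le_max_of_le_right ((Real.le_sqrt hr.le (by positivity)).mpr hr2)

lemma scaleK_le_scaleK_add_dist (p q : X) :
    scaleK K p ≤ scaleK K q + ENNReal.ofReal (dist p q) := by
  refine iSup₂_le fun r ⟨hr, hball⟩ => ?_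
  rcases le_or_gt r (dist p q) with hrd | hdr
  · exact (ENNReal.ofReal_le_ofReal hrd).trans le_add_self
  · have hadm : 0 < r - dist p q ∧
        ∀ y : X, dist q y < r - dist p q → K y ≤ ((r - dist p q) ^ 2)⁻¹ := by
      refine ⟨sub_pos.mpr hdr, fun y hy => (hball y ?_).trans ?_⟩
      · linarith [dist_triangle p q y]
      · exact inv_anti₀ (by nlinarith) (pow_le_pow_left₀ (sub_pos.mpr hdr).le
          (sub_le_self r dist_nonneg) 2)
    calc ENNReal.ofReal r = ENNReal.ofReal (r - dist p q) + ENNReal.ofReal (dist p q) := by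
          rw [← ENNReal.ofReal_add (sub_pos.mpr hdr).le dist_nonneg, sub_add_cancel]
      _ ≤ scaleK K q + ENNReal.ofReal (dist p q) := by gcongr; exact ofReal_le_scaleK K hadm

lemma lipschitzWith_toReal_scaleK (hfin : ∀ p : X, scaleK K p ≠ ⊤) :
    LipschitzWith 1 fun p => (scaleK K p).toReal :=
  LipschitzWith.of_le_add fun p q => by
    simpa only [ENNReal.toReal_ofReal dist_nonneg] using
      ENNReal.toReal_le_add (scaleK_le_scaleK_add_dist K p q) (hfin q) ENNReal.ofReal_ne_top

end

theorem scaleK_dichotomy {X : Type*} [MetricSpace X] (K : X → ℝ)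
    (hKc : Continuous K) (hK0 : ∀ x, 0 ≤ K x) :
    Xor'
      ((∀ x, K x = 0) ∧ ∀ p : X, scaleK K p = ⊤)
      ((¬ ∀ x, K x = 0) ∧ (∀ p : X, 0 < scaleK K p ∧ scaleK K p < ⊤) ∧
        ∀ p q : X, |(scaleK K p).toReal - (scaleK K q).toReal| ≤ dist p q) := by
  by_cases hzero : ∀ x, K x = 0
  · exact Or.inl ⟨⟨hzero, scaleK_eq_top_of_nonpos K fun x => (hzero x).le⟩, fun h => h.1 hzero⟩
  · obtain ⟨x, hx⟩ := not_forall.mp hzero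
    have hfin : ∀ p, scaleK K p < ⊤ := scaleK_lt_top K ((hK0 x).lt_of_ne' hx)
    have hlip := lipschitzWith_toReal_scaleK K fun p => (hfin p).ne
    refine Or.inr ⟨⟨hzero, fun p => ⟨scaleK_pos K (hKc.upperSemicontinuous p), hfin p⟩,
      fun p q => ?_⟩, fun h => hzero h.1⟩
    simpa [Real.dist_eq] using hlip.dist_le_mul p q
end

section
/- Let (X,d) be a metric space, l : X → ℝ a positive 1-Lipschitz scale function, and 0 < ζ < 1/4. Let p, q₁, q₂ ∈ X be such that B(q₁, 2ζ·l(q₁)) ∩ B(p, 2ζ·l(p)) ≠ ∅, B(q₂, 2ζ·l(q₂)) ∩ B(p, 2ζ·l(p)) ≠ ∅, and d(q₁, q₂) ≥ ζ·min(l(q₁), l(q₂)). Then, with ρ := (ζ(1−2ζ)/(2(1+2ζ)))·l(p), the balls B(q₁, ρ) and B(q₂, ρ) are disjoint. -/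
open Metric

theorem LipschitzWith.one_sub_mul_lt_one_add_mul_of_inter_nonempty {X : Type*}
    [PseudoMetricSpace X] {l : X → ℝ} (hl : LipschitzWith 1 l) {c : ℝ} {p q : X}
    (h : (ball q (c * l q) ∩ ball p (c * l p)).Nonempty) :
    (1 - c) * l p < (1 + c) * l q := by
  obtain ⟨x, hxq, hxp⟩ := h
  rw [mem_ball] at hxq hxp
  have hdist : dist q p < c * l q + c * l p :=
    (dist_triangle_left q p x).trans_lt (add_lt_add hxq hxp)
  have hlip : l p - l q ≤ dist q p := by
    simpa [Real.dist_eq, dist_comm] using (le_abs_self _).trans (hl.dist_le_mul p q)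
  linarith

theorem scale_ball_disjoint_general {X : Type*} [MetricSpace X] (l : X → ℝ)
    (hl_lip : ∀ x y, |l x - l y| ≤ dist x y)
    (ζ : ℝ) (hζ0 : 0 < ζ) (p q₁ q₂ : X)
    (h₁ : (ball q₁ (2 * ζ * l q₁) ∩ ball p (2 * ζ * l p)).Nonempty)
    (h₂ : (ball q₂ (2 * ζ * l q₂) ∩ ball p (2 * ζ * l p)).Nonempty)
    (hsep : ζ * min (l q₁) (l q₂) ≤ dist q₁ q₂) :
    Disjoint (ball q₁ ((ζ * (1 - 2 * ζ) / (2 * (1 + 2 * ζ))) * l p))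
      (ball q₂ ((ζ * (1 - 2 * ζ) / (2 * (1 + 2 * ζ))) * l p)) := by
  have hl : LipschitzWith 1 l :=
    LipschitzWith.of_dist_le_mul fun x y => by simpa [Real.dist_eq] using hl_lip x y
  have hpos : 0 < 1 + 2 * ζ := by linarith
  have hmin : (1 - 2 * ζ) * l p ≤ (1 + 2 * ζ) * min (l q₁) (l q₂) := by
    rw [mul_min_of_nonneg _ _ hpos.le]
    exact le_min (hl.one_sub_mul_lt_one_add_mul_of_inter_nonempty h₁).le
      (hl.one_sub_mul_lt_one_add_mul_of_inter_nonempty h₂).le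
  refine ball_disjoint_ball ?_
  calc _ = ζ / (1 + 2 * ζ) * ((1 - 2 * ζ) * l p) := by field_simp; ring
    _ ≤ ζ / (1 + 2 * ζ) * ((1 + 2 * ζ) * min (l q₁) (l q₂)) := by gcongr
    _ = ζ * min (l q₁) (l q₂) := by field_simp
    _ ≤ dist q₁ q₂ := hsep

theorem scale_ball_disjoint {X : Type*} [MetricSpace X] (l : X → ℝ)
    (hl_pos : ∀ x, 0 < l x) (hl_lip : ∀ x y, |l x - l y| ≤ dist x y)
    (ζ : ℝ) (hζ0 : 0 < ζ) (hζ : ζ < 1/4) (p q₁ q₂ : X)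
    (h₁ : (ball q₁ (2 * ζ * l q₁) ∩ ball p (2 * ζ * l p)).Nonempty)
    (h₂ : (ball q₂ (2 * ζ * l q₂) ∩ ball p (2 * ζ * l p)).Nonempty)
    (hsep : ζ * min (l q₁) (l q₂) ≤ dist q₁ q₂) :
    Disjoint (ball q₁ ((ζ * (1 - 2 * ζ) / (2 * (1 + 2 * ζ))) * l p))
      (ball q₂ ((ζ * (1 - 2 * ζ) / (2 * (1 + 2 * ζ))) * l p)) :=
  scale_ball_disjoint_general l hl_lip ζ hζ0 p q₁ q₂ h₁ h₂ hsep
end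

section
/- Work in 4-dimensional Euclidean space ℝ⁴ with Lebesgue measure, and set \barμ_R(r) := ∫_{B(0,r)} e^{R‖x‖} dx for R, r > 0, where B(0,r) is the open ball of radius r centered at the origin. Then for every R > 0 and every r with 0 < r ≤ R, one has \barμ_R(2r) ≤ 16·e^{R²}·\barμ_R(r). -/
/-! Scaling by `2` turns the integral of `e^{R‖x‖}` over `B(0, 2r)` into `2⁴` times the integral
of `e^{2R‖x‖}` over `B(0, r)`, and on `B(0, r)` we have
`e^{2R‖x‖} = e^{R‖x‖} e^{R‖x‖} ≤ e^{Rr} e^{R‖x‖} ≤ e^{R²} e^{R‖x‖}` since `r ≤ R`. -/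

open Metric MeasureTheory

/-- The weighted volume of the ball of radius `r` about the origin in the model space
`M⁴_R = (ℝ⁴, g_Euc, e^{R‖x‖} dx)`. -/
noncomputable def mubar (R r : ℝ) : ℝ :=
  ∫ x in ball (0 : EuclideanSpace ℝ (Fin 4)) r, Real.exp (R * ‖x‖)

open Module Pointwise Real

section AddHaar

variable {E F : Type*} [NormedAddCommGroup E] [NormedSpace ℝ E] [FiniteDimensional ℝ E]
  [MeasurableSpace E] [BorelSpace E] [NormedAddCommGroup F] [NormedSpace ℝ F]
  (μ : Measure E) [μ.IsAddHaarMeasure]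

theorem setIntegral_ball_zero_mul (f : E → F) {c : ℝ} (hc : 0 < c) (r : ℝ) :
    ∫ x in ball (0 : E) (c * r), f x ∂μ = c ^ finrank ℝ E • ∫ x in ball (0 : E) r, f (c • x) ∂μ := by
  rw [Measure.setIntegral_comp_smul_of_pos μ f _ hc, _root_.smul_ball hc.ne', smul_zero,
    Real.norm_of_nonneg hc.le, smul_inv_smul₀ (pow_ne_zero _ hc.ne')]

theorem integrableOn_ball_exp_mul_norm (R r : ℝ) :
    IntegrableOn (fun x : E ↦ exp (R * ‖x‖)) (ball 0 r) μ :=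
  ((by fun_prop : Continuous fun x : E ↦ exp (R * ‖x‖)).continuousOn.integrableOn_compact
    (isCompact_closedBall 0 r)).mono_set ball_subset_closedBall

theorem setIntegral_ball_exp_mul_norm_two_mul_le {R : ℝ} (hR : 0 ≤ R) (r : ℝ) :
    ∫ x in ball (0 : E) (2 * r), exp (R * ‖x‖) ∂μ
      ≤ 2 ^ finrank ℝ E * exp (R * r) * ∫ x in ball (0 : E) r, exp (R * ‖x‖) ∂μ := by
  rw [setIntegral_ball_zero_mul μ _ two_pos, smul_eq_mul, mul_assoc]
  refine mul_le_mul_of_nonneg_left ?_ (by positivity)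
  rw [← integral_const_mul]
  refine setIntegral_mono_on ?_ ((integrableOn_ball_exp_mul_norm μ R r).const_mul _)
    measurableSet_ball fun x hx ↦ ?_
  · simpa [norm_smul, mul_left_comm, mul_assoc] using integrableOn_ball_exp_mul_norm μ (2 * R) r
  · have hx : R * ‖x‖ ≤ R * r := by gcongr; exact (mem_ball_zero_iff.1 hx).le
    rw [norm_smul, Real.norm_two, ← exp_add]
    gcongr
    linarith

end AddHaar

theorem mubar_doubling_general (R r : ℝ) (hR : 0 < R) (hrR : r ≤ R) :
    mubar R (2 * r) ≤ 16 * Real.exp (R ^ 2) * mubar R r := by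
  have hmubar : 0 ≤ mubar R r := setIntegral_nonneg measurableSet_ball fun _ _ ↦ (exp_pos _).le
  calc mubar R (2 * r) ≤ 2 ^ 4 * exp (R * r) * mubar R r := by
        simpa [mubar] using setIntegral_ball_exp_mul_norm_two_mul_le
          (volume : Measure (EuclideanSpace ℝ (Fin 4))) hR.le r
    _ ≤ 16 * exp (R ^ 2) * mubar R r := by
        have hRr : R * r ≤ R ^ 2 := by nlinarith
        gcongr
        norm_num

theorem mubar_doubling (R r : ℝ) (hR : 0 < R) (hr : 0 < r) (hrR : r ≤ R) :
    mubar R (2 * r) ≤ 16 * Real.exp (R ^ 2) * mubar R r :=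
  mubar_doubling_general R r hR hrR
end

section
/- Let (X,d) be a metric space carrying a Borel measure μ such that every open ball has positive finite measure and μ(B(x,2r)) ≤ C_D·μ(B(x,r)) for all x ∈ X and r > 0, for some constant C_D ≥ 1. Fix s > 0 and α ∈ (0,1). For a μ-integrable function u : X → ℝ define the restricted maximal function M_u(x) := sup_{0 < s' ≤ s} (μ(B(x,s')))⁻¹ ∫_{B(x,s')} |u| dμ. Then there exists a constant C > 0, depending only on C_D and α, such that for every Borel set W ⊆ X with 0 < μ(W) < ∞, ((1/μ(W)) ∫_W M_u(x)^α dμ(x))^{1/α} ≤ (C/μ(W)) ∫_{B(W,6s)} |u| dμ, where B(W,6s) := {x ∈ X : d(x,w) < 6s for some w ∈ W} is the open 6s-neighborhood of W. -/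
/-!
Replace `M_u` by a maximal function over rational radii that compares the mass of `|u| μ` on a
ball with the `μ`-measure of the half ball: it dominates `M_u`, and it is measurable because
`x ↦ μ (ball x r)` is lower semicontinuous. The Vitali covering lemma and four doublings give the
weak-type bound `t μ {x ∈ W | M x > t} ≤ C_D⁴ ∫_{B(W,6s)} |u|`. Cutting `W` along the dyadic levels
`2ᵏ T` of the maximal function, where `T` is that weak-type constant divided by `μ W`, turns it
into the `L^α` bound; the resulting geometric series has ratio `2^α / 2` and converges since
`α < 1`.
-/

open Metric MeasureTheory
open scoped ENNReal

/-- The maximal function of `u` restricted to scales at most `s`: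
`M_u(x) = sup_{0 < s' ≤ s} μ(B(x,s'))⁻¹ ∫_{B(x,s')} |u| dμ`, valued in `ℝ≥0∞`. -/
noncomputable def restrMaximal {X : Type*} [MetricSpace X] [MeasurableSpace X]
    (μ : Measure X) (s : ℝ) (u : X → ℝ) (x : X) : ℝ≥0∞ :=
  ⨆ (s' : ℝ) (_ : s' ∈ Set.Ioc (0:ℝ) s),
    (μ (ball x s'))⁻¹ * ∫⁻ y in ball x s', ENNReal.ofReal |u y| ∂μ

open Set Function

section Balls

variable {X : Type*} [PseudoMetricSpace X] [MeasurableSpace X]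

theorem lowerSemicontinuous_measure_ball [OpensMeasurableSpace X] (ν : Measure X) (r : ℝ) :
    LowerSemicontinuous fun x ↦ ν (ball x r) := by
  intro x a (ha : a < ν (ball x r))
  have hmono : Monotone fun r' : Iio r ↦ ball x r' := fun _ _ h ↦ ball_subset_ball h
  have hunion := hmono.measure_iUnion (μ := ν)
  simp only [iUnion_subtype, mem_Iio, biUnion_lt_ball] at hunion
  obtain ⟨⟨r', hr'⟩, hlt⟩ := lt_iSup_iff.mp (hunion ▸ ha)
  filter_upwards [ball_mem_nhds x (sub_pos.mpr hr')] with y hy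
  refine hlt.trans_le (measure_mono (ball_subset_ball' ?_))
  rw [mem_ball] at hy
  rw [dist_comm]
  linarith

theorem measurable_measure_ball [OpensMeasurableSpace X] (ν : Measure X) (r : ℝ) :
    Measurable fun x ↦ ν (ball x r) :=
  (lowerSemicontinuous_measure_ball ν r).measurable

theorem measure_ball_two_pow_mul_le {μ : Measure X} {D : ℝ≥0∞}
    (hdouble : ∀ (x : X) (r : ℝ), 0 < r → μ (ball x (2 * r)) ≤ D * μ (ball x r))
    (x : X) {r : ℝ} (hr : 0 < r) (n : ℕ) :
    μ (ball x (2 ^ n * r)) ≤ D ^ n * μ (ball x r) := by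
  induction n with
  | zero => simp
  | succ n ih =>
    calc μ (ball x (2 ^ (n + 1) * r)) = μ (ball x (2 * (2 ^ n * r))) := by ring_nf
      _ ≤ D * μ (ball x (2 ^ n * r)) := hdouble x _ (by positivity)
      _ ≤ D * (D ^ n * μ (ball x r)) := by gcongr
      _ = D ^ (n + 1) * μ (ball x r) := by ring

theorem mul_measure_ball_eight_mul_le {μ ρ : Measure X} {D : ℝ≥0∞}
    (hdouble : ∀ (x : X) (r : ℝ), 0 < r → μ (ball x (2 * r)) ≤ D * μ (ball x r))
    {x : X} {r : ℝ} (hr : 0 < r) {t : ℝ≥0∞} (h : t * μ (ball x (r / 2)) ≤ ρ (ball x r)) :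
    t * μ (ball x (8 * r)) ≤ D ^ 4 * ρ (ball x r) :=
  calc t * μ (ball x (8 * r)) = t * μ (ball x (2 ^ 4 * (r / 2))) := by ring_nf
    _ ≤ t * (D ^ 4 * μ (ball x (r / 2))) := by
        gcongr
        exact measure_ball_two_pow_mul_le hdouble x (half_pos hr) 4
    _ = D ^ 4 * (t * μ (ball x (r / 2))) := by ring
    _ ≤ D ^ 4 * ρ (ball x r) := by gcongr

theorem mul_measure_le_of_forall_exists_ball [OpensMeasurableSpace X] {μ ρ : Measure X}
    [SFinite ρ] {D : ℝ≥0∞}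
    (hpos : ∀ (x : X) (r : ℝ), 0 < r → μ (ball x r) ≠ 0)
    (hdouble : ∀ (x : X) (r : ℝ), 0 < r → μ (ball x (2 * r)) ≤ D * μ (ball x r))
    {E V : Set X} {R : ℝ} {t : ℝ≥0∞} (ht : t ≠ 0)
    (h : ∀ x ∈ E, ∃ q, 0 < q ∧ q ≤ R ∧ closedBall x q ⊆ V ∧
      t * μ (ball x (q / 2)) ≤ ρ (ball x q)) :
    t * μ E ≤ D ^ 4 * ρ V := by
  choose r hr0 hrR hrV hrt using fun x : E ↦ h x x.2
  obtain ⟨v, -, hdisj, hcov⟩ := Vitali.exists_disjoint_subfamily_covering_enlargement_closedBall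
    univ Subtype.val r R (fun x _ ↦ hrR x) 4 (by norm_num)
  have hdisjoint : Pairwise (Disjoint on fun b : v ↦ closedBall (b : X) (r b)) :=
    fun b c hbc ↦ hdisj b.2 c.2 (Subtype.coe_ne_coe.mpr hbc)
  -- Each selected ball carries positive `ρ`-mass, so the disjoint family is countable.
  have hv : v.Countable := by
    have hposρ : ∀ b : E, 0 < ρ (closedBall (b : X) (r b)) := fun b ↦
      (ENNReal.mul_pos ht (hpos b _ (half_pos (hr0 b)))).trans_le
        ((hrt b).trans (measure_mono ball_subset_closedBall))
    have := Measure.countable_meas_pos_of_disjoint_iUnion (μ := ρ)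
      (fun _ ↦ measurableSet_closedBall) hdisjoint
    simp only [hposρ, ofPred_true] at this
    exact countable_coe_iff.mp (countable_univ_iff.mp this)
  have hE : E ⊆ ⋃ b ∈ v, ball (b : X) (8 * r b) := by
    intro x hx
    obtain ⟨b, hb, hsub⟩ := hcov ⟨x, hx⟩ (mem_univ _)
    refine mem_biUnion hb (closedBall_subset_ball ?_ (hsub (mem_closedBall_self (hr0 _).le)))
    linarith [hr0 b]
  calc t * μ E ≤ t * ∑' b : v, μ (ball (b : X) (8 * r b)) := by
        gcongr
        exact (measure_mono hE).trans (measure_biUnion_le μ hv _)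
    _ = ∑' b : v, t * μ (ball (b : X) (8 * r b)) := ENNReal.tsum_mul_left.symm
    _ ≤ ∑' b : v, D ^ 4 * ρ (closedBall (b : X) (r b)) := ENNReal.tsum_le_tsum fun b ↦
        (mul_measure_ball_eight_mul_le hdouble (hr0 b) (hrt b)).trans
          (by gcongr; exact ball_subset_closedBall)
    _ = D ^ 4 * ∑' b : v, ρ (closedBall (b : X) (r b)) := ENNReal.tsum_mul_left
    _ ≤ D ^ 4 * ρ V := by
        gcongr
        exact (tsum_meas_le_meas_iUnion_of_disjoint ρ (fun _ ↦ measurableSet_closedBall)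
          hdisjoint).trans (measure_mono (iUnion_subset fun b ↦ hrV b))

end Balls

section RationalMaximal

variable {X : Type*} [PseudoMetricSpace X] [MeasurableSpace X]

/-- Comparing `ρ` on a ball with `μ` on the half ball lets rational radii dominate every real
radius, so this countable supremum bounds `restrMaximal` and is measurable. -/
noncomputable def ratBallMaximal (μ ρ : Measure X) (R : ℝ) (x : X) : ℝ≥0∞ :=
  ⨆ (q : ℚ) (_ : 0 < (q : ℝ) ∧ (q : ℝ) ≤ R), (μ (ball x (q / 2)))⁻¹ * ρ (ball x q)

theorem measurable_ratBallMaximal [OpensMeasurableSpace X] (μ ρ : Measure X) (R : ℝ) :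
    Measurable (ratBallMaximal μ ρ R) :=
  .iSup fun _ ↦ .iSup fun _ ↦ (measurable_measure_ball μ _).inv.mul (measurable_measure_ball ρ _)

theorem mul_measure_lt_ratBallMaximal_le [OpensMeasurableSpace X] {μ ρ : Measure X} [SFinite ρ]
    {D : ℝ≥0∞} (hpos : ∀ (x : X) (r : ℝ), 0 < r → μ (ball x r) ≠ 0)
    (hdouble : ∀ (x : X) (r : ℝ), 0 < r → μ (ball x (2 * r)) ≤ D * μ (ball x r))
    {R δ : ℝ} (hRδ : R < δ) (W : Set X) {t : ℝ≥0∞} (ht : t ≠ 0) :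
    t * μ (W ∩ {x | t < ratBallMaximal μ ρ R x}) ≤ D ^ 4 * ρ (thickening δ W) := by
  refine mul_measure_le_of_forall_exists_ball (R := R) hpos hdouble ht fun x ⟨hxW, hx⟩ ↦ ?_
  obtain ⟨q, ⟨hq0, hqR⟩, hlt⟩ : ∃ q : ℚ, (0 < (q : ℝ) ∧ (q : ℝ) ≤ R) ∧
      t < (μ (ball x (q / 2)))⁻¹ * ρ (ball x q) := by
    simpa only [mem_ofPred_eq, ratBallMaximal, lt_iSup_iff, exists_prop] using hx
  refine ⟨q, hq0, hqR, fun y hy ↦ mem_thickening_iff.mpr ⟨x, hxW, ?_⟩, ?_⟩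
  · linarith [mem_closedBall.mp hy]
  · rw [mul_comm, ← div_eq_mul_inv] at hlt
    exact ENNReal.mul_le_of_le_div hlt.le

end RationalMaximal

theorem restrMaximal_le_ratBallMaximal {X : Type*} [MetricSpace X] [MeasurableSpace X]
    [OpensMeasurableSpace X] (μ : Measure X) (s : ℝ) (u : X → ℝ) (x : X) :
    restrMaximal μ s u x ≤
      ratBallMaximal μ (μ.withDensity fun y ↦ ENNReal.ofReal |u y|) (2 * s) x := by
  refine iSup₂_le fun s' ⟨hs'0, hs's⟩ ↦ ?_
  obtain ⟨q, hs'q, hq2s'⟩ := exists_rat_btwn (show s' < 2 * s' by linarith)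
  refine le_iSup₂_of_le q ⟨hs'0.trans hs'q, by linarith⟩ ?_
  rw [withDensity_apply _ measurableSet_ball]
  gcongr ?_ * ?_
  · exact ENNReal.inv_le_inv' (measure_mono (ball_subset_ball (x := x) (by linarith)))
  · exact lintegral_mono_set (ball_subset_ball hs'q.le)

section WeakType

theorem exists_two_pow_mul_lt_le {T a : ℝ≥0∞} (hT : T ≠ 0) (hTa : T < a) (ha : a ≠ ⊤) :
    ∃ k : ℕ, 2 ^ k * T < a ∧ a ≤ 2 ^ (k + 1) * T := by
  classical
  have hex : ∃ n : ℕ, a ≤ 2 ^ n * T := by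
    obtain ⟨n, hn⟩ := ENNReal.exists_nat_mul_gt hT ha
    exact ⟨n, hn.le.trans (by gcongr; exact_mod_cast Nat.lt_two_pow_self.le)⟩
  have hfind : Nat.find hex ≠ 0 := fun h0 ↦ by
    simpa [h0] using hTa.trans_le (Nat.find_spec hex)
  refine ⟨Nat.find hex - 1, not_le.mp (Nat.find_min hex (by omega)), ?_⟩
  rw [Nat.sub_add_cancel (Nat.pos_of_ne_zero hfind)]
  exact Nat.find_spec hex

theorem rpow_le_add_tsum_indicator {α : ℝ} (hα : 0 ≤ α) {T : ℝ≥0∞} (hT0 : T ≠ 0) (hT : T ≠ ⊤)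
    (a : ℝ≥0∞) :
    a ^ α ≤ T ^ α + ∑' k : ℕ, (Ioi (2 ^ k * T)).indicator (fun _ ↦ (2 ^ (k + 1) * T) ^ α) a := by
  rcases le_or_gt a T with haT | hTa
  · exact le_add_right (ENNReal.rpow_le_rpow haT hα)
  rcases eq_or_ne a ⊤ with rfl | ha
  · -- every term is at least `T ^ α ≠ 0`, so the series diverges
    suffices ∑' k : ℕ, (Ioi (2 ^ k * T)).indicator (fun _ ↦ (2 ^ (k + 1) * T) ^ α) ⊤ = ⊤ by
      simp [this]
    refine top_unique ((ENNReal.tsum_const_eq_top_of_ne_zero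
      (ENNReal.rpow_pos (p := α) (pos_iff_ne_zero.mpr hT0) hT).ne').symm.le.trans
      (ENNReal.tsum_le_tsum fun k ↦ ?_))
    rw [indicator_of_mem (s := Ioi (2 ^ k * T))
      (mem_Ioi.mpr (ENNReal.mul_lt_top (ENNReal.pow_lt_top ENNReal.ofNat_lt_top) hT.lt_top))]
    exact ENNReal.rpow_le_rpow (le_mul_of_one_le_left' (one_le_pow₀ one_le_two)) hα
  obtain ⟨k, hk, hk'⟩ := exists_two_pow_mul_lt_le hT0 hTa ha
  calc a ^ α ≤ (2 ^ (k + 1) * T) ^ α := ENNReal.rpow_le_rpow hk' hα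
    _ = (Ioi (2 ^ k * T)).indicator (fun _ ↦ (2 ^ (k + 1) * T) ^ α) a :=
        (indicator_of_mem (s := Ioi (2 ^ k * T)) hk fun _ ↦ (2 ^ (k + 1) * T) ^ α).symm
    _ ≤ _ := ENNReal.le_tsum k
    _ ≤ _ := le_add_self

theorem two_pow_succ_mul_rpow_mul_inv {α : ℝ} (hα : 0 ≤ α) {T : ℝ≥0∞} (hT0 : T ≠ 0)
    (hT : T ≠ ⊤) (k : ℕ) :
    (2 ^ (k + 1) * T) ^ α * ((2 ^ k * T)⁻¹ * T) = 2 ^ α * T ^ α * (2 ^ α / 2) ^ k := by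
  have hpow : ((2 : ℝ≥0∞) ^ (k + 1)) ^ α = (2 ^ α) ^ (k + 1) := by
    rw [← ENNReal.rpow_natCast, ← ENNReal.rpow_mul, mul_comm, ENNReal.rpow_mul,
      ENNReal.rpow_natCast]
  rw [ENNReal.mul_rpow_of_nonneg _ _ hα, hpow, ENNReal.mul_inv (by simp) (by simp), mul_assoc _ T⁻¹,
    ENNReal.inv_mul_cancel hT0 hT, div_eq_mul_inv, mul_pow, ENNReal.inv_pow]
  ring

theorem lintegral_rpow_le_of_mul_measure_lt_le {Ω : Type*} [MeasurableSpace Ω] {ν : Measure Ω}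
    {f : Ω → ℝ≥0∞} (hf : Measurable f) {α : ℝ} (hα0 : 0 < α) {T : ℝ≥0∞}
    (hT : T ≠ ⊤) (hweak : ∀ t, t ≠ 0 → t * ν {x | t < f x} ≤ T * ν univ) :
    ∫⁻ x, f x ^ α ∂ν ≤ (1 + 2 ^ α * (1 - 2 ^ α / 2)⁻¹) * T ^ α * ν univ := by
  rcases eq_or_ne T 0 with rfl | hT0
  · have hnull : ∀ n : ℕ, ν {x | (n : ℝ≥0∞)⁻¹ < f x} = 0 := fun n ↦ by
      simpa using hweak (n : ℝ≥0∞)⁻¹ (by simp)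
    have hf0 : f =ᵐ[ν] 0 :=
      measure_mono_null (fun x hx ↦ mem_iUnion.mpr (ENNReal.exists_inv_nat_lt hx))
        (measure_iUnion_null hnull)
    rw [lintegral_congr_ae (hf0.mono fun x hx ↦ by rw [hx, Pi.zero_apply,
      ENNReal.zero_rpow_of_pos hα0]), lintegral_zero]
    exact zero_le
  have hlevel : ∀ k : ℕ, ν {x | 2 ^ k * T < f x} ≤ (2 ^ k * T)⁻¹ * (T * ν univ) := fun k ↦
    (ENNReal.mul_le_iff_le_inv (by simp [hT0]) (ENNReal.mul_ne_top (by simp) hT)).mp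
      (hweak _ (by simp [hT0]))
  have hmeas : ∀ k : ℕ, AEMeasurable
      (fun x ↦ (Ioi (2 ^ k * T)).indicator (fun _ ↦ (2 ^ (k + 1) * T) ^ α) (f x)) ν :=
    fun k ↦ ((measurable_const.indicator measurableSet_Ioi).comp hf).aemeasurable
  calc ∫⁻ x, f x ^ α ∂ν
      ≤ ∫⁻ x, T ^ α + ∑' k : ℕ,
          (Ioi (2 ^ k * T)).indicator (fun _ ↦ (2 ^ (k + 1) * T) ^ α) (f x) ∂ν :=
        lintegral_mono fun x ↦ rpow_le_add_tsum_indicator hα0.le hT0 hT (f x)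
    _ = T ^ α * ν univ + ∑' k : ℕ, (2 ^ (k + 1) * T) ^ α * ν {x | 2 ^ k * T < f x} := by
        rw [lintegral_add_left measurable_const, lintegral_const,
          lintegral_tsum hmeas]
        congr 1
        refine tsum_congr fun k ↦ ?_
        exact lintegral_indicator_const (hf measurableSet_Ioi) _
    _ ≤ T ^ α * ν univ + ∑' k : ℕ, (2 ^ (k + 1) * T) ^ α * ((2 ^ k * T)⁻¹ * (T * ν univ)) := by
        gcongr with k
        exact hlevel k
    _ = T ^ α * ν univ + 2 ^ α * T ^ α * ν univ * ∑' k : ℕ, (2 ^ α / 2) ^ k := by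
        rw [← ENNReal.tsum_mul_left]
        congr 1
        refine tsum_congr fun k ↦ ?_
        rw [← mul_assoc ((2 ^ k * T)⁻¹), ← mul_assoc,
          two_pow_succ_mul_rpow_mul_inv hα0.le hT0 hT]
        ring
    _ = (1 + 2 ^ α * (1 - 2 ^ α / 2)⁻¹) * T ^ α * ν univ := by
        rw [ENNReal.tsum_geometric]
        ring

theorem one_add_two_rpow_mul_inv_ne_top {α : ℝ} (hα : α < 1) :
    (1 : ℝ≥0∞) + 2 ^ α * (1 - 2 ^ α / 2)⁻¹ ≠ ⊤ := by
  have hratio : (2 : ℝ≥0∞) ^ α / 2 < 1 := by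
    rw [ENNReal.div_lt_iff (by simp) (by simp), one_mul]
    simpa using ENNReal.rpow_lt_rpow_of_exponent_lt (x := 2) (by norm_num) (by simp) hα
  exact ENNReal.add_ne_top.mpr ⟨ENNReal.one_ne_top, ENNReal.mul_ne_top
    (ENNReal.rpow_ne_top_of_ne_zero (by simp) (by simp))
    (ENNReal.inv_ne_top.mpr (tsub_pos_of_lt hratio).ne')⟩

theorem inv_mul_setLIntegral_rpow_rpow_le {Ω : Type*} [MeasurableSpace Ω] {μ : Measure Ω}
    {W : Set Ω} (hW : MeasurableSet W) (hW0 : μ W ≠ 0) (hWtop : μ W ≠ ⊤) {f : Ω → ℝ≥0∞}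
    (hf : Measurable f) {α : ℝ} (hα0 : 0 < α) {T : ℝ≥0∞} (hT : T ≠ ⊤)
    (hweak : ∀ t, t ≠ 0 → t * μ (W ∩ {x | t < f x}) ≤ T * μ W) :
    ((μ W)⁻¹ * ∫⁻ x in W, f x ^ α ∂μ) ^ (1 / α) ≤
      (1 + 2 ^ α * (1 - 2 ^ α / 2)⁻¹) ^ (1 / α) * T := by
  have hint := lintegral_rpow_le_of_mul_measure_lt_le (ν := μ.restrict W) hf hα0 hT fun t ht ↦ by
    rw [Measure.restrict_apply' hW, Measure.restrict_apply_univ, inter_comm]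
    exact hweak t ht
  rw [Measure.restrict_apply_univ] at hint
  calc _ ≤ ((μ W)⁻¹ * ((1 + 2 ^ α * (1 - 2 ^ α / 2)⁻¹) * T ^ α * μ W)) ^ (1 / α) := by gcongr
    _ = (1 + 2 ^ α * (1 - 2 ^ α / 2)⁻¹) ^ (1 / α) * T := by
        rw [mul_comm, mul_assoc, ENNReal.mul_inv_cancel hW0 hWtop, mul_one,
          ENNReal.mul_rpow_of_nonneg _ _ (by positivity), one_div, ENNReal.rpow_rpow_inv hα0.ne']

end WeakType

theorem maximal_function_estimate (C_D α : ℝ) (hCD : 1 ≤ C_D) (hα0 : 0 < α) (hα1 : α < 1) :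
    ∃ C : ℝ, 0 < C ∧
      ∀ (X : Type*) [MetricSpace X] [MeasurableSpace X] [BorelSpace X]
        (μ : Measure X),
        (∀ (x : X) (r : ℝ), 0 < r → 0 < μ (ball x r) ∧ μ (ball x r) < ⊤) →
        (∀ (x : X) (r : ℝ), 0 < r → μ (ball x (2 * r)) ≤ ENNReal.ofReal C_D * μ (ball x r)) →
        ∀ (s : ℝ), 0 < s →
        ∀ (u : X → ℝ), Integrable u μ →
        ∀ (W : Set X), MeasurableSet W → 0 < μ W → μ W < ⊤ →
          ((μ W)⁻¹ * ∫⁻ x in W, (restrMaximal μ s u x) ^ α ∂μ) ^ (1 / α) ≤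
            ENNReal.ofReal C * (μ W)⁻¹ *
              ∫⁻ x in {y : X | ∃ w ∈ W, dist y w < 6 * s}, ENNReal.ofReal |u x| ∂μ := by
  set κ : ℝ≥0∞ := 1 + 2 ^ α * (1 - 2 ^ α / 2)⁻¹
  set D := ENNReal.ofReal C_D
  have hC : κ ^ (1 / α) * D ^ 4 ≠ ⊤ := ENNReal.mul_ne_top
    (ENNReal.rpow_ne_top_of_nonneg (by positivity) (one_add_two_rpow_mul_inv_ne_top hα1))
    (by simp [D])
  have hC0 : κ ^ (1 / α) * D ^ 4 ≠ 0 :=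
    mul_ne_zero (ENNReal.rpow_pos (zero_lt_one.trans_le le_self_add)
      (one_add_two_rpow_mul_inv_ne_top hα1)).ne'
      (pow_ne_zero 4 (ENNReal.ofReal_pos.mpr (by linarith)).ne')
  refine ⟨(κ ^ (1 / α) * D ^ 4).toReal, ENNReal.toReal_pos hC0 hC, ?_⟩
  intro X _ _ _ μ hball hdouble s hs u hu W hW hW0 hWtop
  set ρ := μ.withDensity fun y ↦ ENNReal.ofReal |u y|
  have : IsFiniteMeasure ρ := isFiniteMeasure_withDensity_ofReal hu.abs.2
  have hV : {y : X | ∃ w ∈ W, dist y w < 6 * s} = thickening (6 * s) W := by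
    ext
    exact mem_thickening_iff.symm
  rw [hV, ← withDensity_apply _ isOpen_thickening.measurableSet, ENNReal.ofReal_toReal hC]
  set T := D ^ 4 * ρ (thickening (6 * s) W) / μ W with hT
  calc _ ≤ ((μ W)⁻¹ * ∫⁻ x in W, ratBallMaximal μ ρ (2 * s) x ^ α ∂μ) ^ (1 / α) := by
        gcongr with x
        exact restrMaximal_le_ratBallMaximal μ s u x
    _ ≤ κ ^ (1 / α) * T := by
        refine inv_mul_setLIntegral_rpow_rpow_le hW hW0.ne' hWtop.ne
          (measurable_ratBallMaximal μ ρ _) hα0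
          (ENNReal.div_ne_top (ENNReal.mul_ne_top (by simp [D]) (measure_ne_top _ _)) hW0.ne')
          fun t ht ↦ ?_
        rw [hT, ENNReal.div_mul_cancel hW0.ne' hWtop.ne]
        exact mul_measure_lt_ratBallMaximal_le (fun x r hr ↦ (hball x r hr).1.ne') hdouble
          (by linarith) W ht
    _ = κ ^ (1 / α) * D ^ 4 * (μ W)⁻¹ * ρ (thickening (6 * s) W) := by
        rw [hT, div_eq_mul_inv _ (μ W)]
        ring
end

section
/- For every c > 0 there exists a constant C > 0, depending only on c, with the following property: for every r ∈ (0,1) and every sequence (x_i)_{i≥1} of nonnegative real numbers satisfying x_i ≤ c·r⁻⁴·16^i + c·r⁻¹·2^i·x_{i+1}^{3/4} for every i ≥ 1, and limsup_{i→∞} x_i^{(3/4)^i} ≤ 1, one has x₁ ≤ C·r⁻⁴. -/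
/-!
Rescaling `y i = r ^ 4 * x i` removes `r`: `y i ≤ c * 16 ^ i + c * 2 ^ i * y (i + 1) ^ (3 / 4)`
and `y i ≤ x i`. Choose `d` with `2 * c ≤ 2 ^ d` and let `e i = blowupExponent d i`.
If `y 1 > 2 ^ e 1`, then inductively `y i ≥ 2 ^ e i`: the term `c * 16 ^ i` is then at most
`y i / 2`, so `y (i + 1) ^ (3 / 4) ≥ 2 ^ (e i - d - i)`, and `e (i + 1) = 4 / 3 * (e i - d - i)`.
Hence `y i ^ (3 / 4) ^ i ≥ 2 ^ ((4 / 3) ^ i * (3 / 4) ^ i) = 2` for all `i ≥ 1`, against the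
`limsup` bound.
-/

open Filter Real

noncomputable def blowupExponent (d : ℝ) (i : ℕ) : ℝ := (4 / 3) ^ i + 4 * i + 12 + 4 * d

lemma blowupExponent_succ_mul (d : ℝ) (n : ℕ) :
    blowupExponent d (n + 1) * (3 / 4) = blowupExponent d n - d - n := by
  simp only [blowupExponent, pow_succ]
  push_cast
  ring

lemma add_four_mul_le_blowupExponent {d : ℝ} (hd : 0 ≤ d) (n : ℕ) :
    d + 4 * n ≤ blowupExponent d n := by
  have : (0 : ℝ) ≤ (4 / 3) ^ n := by positivity
  simp only [blowupExponent]
  linarith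

lemma pow_le_blowupExponent {d : ℝ} (hd : 0 ≤ d) (n : ℕ) :
    (4 / 3 : ℝ) ^ n ≤ blowupExponent d n := by
  have : (0 : ℝ) ≤ n := n.cast_nonneg
  simp only [blowupExponent]
  linarith

lemma two_rpow_blowupExponent_succ_le {c d u v : ℝ} {n : ℕ} (hd : 0 ≤ d) (hcd : 2 * c ≤ 2 ^ d)
    (hv : 0 ≤ v) (hrec : u ≤ c * 16 ^ n + c * 2 ^ n * v ^ (3 / 4 : ℝ))
    (hu : 2 ^ blowupExponent d n ≤ u) :
    2 ^ blowupExponent d (n + 1) ≤ v := by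
  have h16 : (16 : ℝ) ^ n = 2 ^ (4 * n : ℝ) := by
    rw [rpow_mul zero_le_two, rpow_natCast]; norm_num
  have hfirst : 2 * (c * 16 ^ n) ≤ 2 ^ blowupExponent d n :=
    calc 2 * (c * 16 ^ n) ≤ 2 ^ d * 2 ^ (4 * n : ℝ) := by rw [← h16, ← mul_assoc]; gcongr
      _ = 2 ^ (d + 4 * n) := (rpow_add two_pos _ _).symm
      _ ≤ 2 ^ blowupExponent d n :=
        rpow_le_rpow_of_exponent_le one_le_two (add_four_mul_le_blowupExponent hd n)
  have hdom : 2 ^ blowupExponent d n ≤ 2 ^ d * 2 ^ n * v ^ (3 / 4 : ℝ) :=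
    calc 2 ^ blowupExponent d n ≤ 2 * (c * 2 ^ n * v ^ (3 / 4 : ℝ)) := by linarith
      _ ≤ 2 ^ d * 2 ^ n * v ^ (3 / 4 : ℝ) := by
        rw [← mul_assoc, ← mul_assoc]; gcongr
  rw [← rpow_le_rpow_iff (by positivity) hv (by norm_num : (0 : ℝ) < 3 / 4),
    ← rpow_mul zero_le_two, blowupExponent_succ_mul, rpow_sub two_pos, rpow_sub two_pos,
    rpow_natCast, div_div, div_le_iff₀ (by positivity)]
  linarith

theorem le_two_rpow_blowupExponent {c d : ℝ} (hd : 0 ≤ d) (hcd : 2 * c ≤ 2 ^ d) {y : ℕ → ℝ}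
    (hy : ∀ i, 1 ≤ i → 0 ≤ y i)
    (hrec : ∀ i, 1 ≤ i → y i ≤ c * 16 ^ i + c * 2 ^ i * y (i + 1) ^ (3 / 4 : ℝ))
    (hfreq : ∃ᶠ i in atTop, y i ^ ((3 / 4 : ℝ) ^ i) < 2) :
    y 1 ≤ 2 ^ blowupExponent d 1 := by
  by_contra! h
  have hgrow : ∀ i, 1 ≤ i → 2 ^ blowupExponent d i ≤ y i := by
    intro i hi
    induction i, hi using Nat.le_induction with
    | base => exact h.le
    | succ n hn ih => exact two_rpow_blowupExponent_succ_le hd hcd (hy _ (by omega)) (hrec n hn) ih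
  obtain ⟨i, hlt, hi⟩ := (hfreq.and_eventually (eventually_ge_atTop 1)).exists
  have : 2 ≤ y i ^ ((3 / 4 : ℝ) ^ i) :=
    calc (2 : ℝ) = (2 ^ ((4 / 3 : ℝ) ^ i)) ^ ((3 / 4 : ℝ) ^ i) := by
          rw [← rpow_mul zero_le_two, ← mul_pow]; norm_num
      _ ≤ (2 ^ blowupExponent d i) ^ ((3 / 4 : ℝ) ^ i) := by
          gcongr
          · exact one_le_two
          · exact pow_le_blowupExponent hd i
      _ ≤ y i ^ ((3 / 4 : ℝ) ^ i) := by gcongr; exact hgrow i hi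
  linarith

lemma mul_le_add_mul_rpow_of_le_add_div {a b r u v : ℝ} (hr : 0 < r) (hv : 0 ≤ v)
    (h : u ≤ a / r ^ 4 + b / r * v ^ (3 / 4 : ℝ)) :
    r ^ 4 * u ≤ a + b * (r ^ 4 * v) ^ (3 / 4 : ℝ) := by
  have hr3 : (r ^ 4) ^ (3 / 4 : ℝ) = r ^ 3 := by
    rw [← rpow_natCast, ← rpow_mul hr.le]; norm_num
  rw [mul_rpow (by positivity) hv, hr3]
  calc r ^ 4 * u ≤ r ^ 4 * (a / r ^ 4 + b / r * v ^ (3 / 4 : ℝ)) := by gcongr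
    _ = a + b * (r ^ 3 * v ^ (3 / 4 : ℝ)) := by field_simp

lemma eventually_mul_rpow_lt_of_limsup_lt {s b : ℝ} {x p : ℕ → ℝ} (hs0 : 0 ≤ s) (hs1 : s ≤ 1)
    (hp : ∀ i, 0 ≤ p i) (hx : ∀ᶠ i in atTop, 0 ≤ x i)
    (h : limsup (fun i => ((x i ^ p i : ℝ) : EReal)) atTop < b) :
    ∀ᶠ i in atTop, (s * x i) ^ p i < b := by
  filter_upwards [eventually_lt_of_limsup_lt h, hx] with i hlt hxi
  calc (s * x i) ^ p i ≤ x i ^ p i :=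
        rpow_le_rpow (by positivity) (mul_le_of_le_one_left hxi hs1) (hp i)
    _ < b := EReal.coe_lt_coe_iff.1 hlt

theorem iteration_lemma_general (c : ℝ) :
    ∃ C : ℝ, 0 < C ∧
      ∀ (r : ℝ), 0 < r → r < 1 →
        ∀ (x : ℕ → ℝ), (∀ i, 1 ≤ i → 0 ≤ x i) →
          (∀ i, 1 ≤ i →
            x i ≤ c * 16 ^ i / r ^ 4 + c * 2 ^ i / r * x (i + 1) ^ ((3:ℝ)/4)) →
          Filter.limsup (fun i : ℕ => ((x i ^ (((3:ℝ)/4) ^ i) : ℝ) : EReal)) Filter.atTop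
              ≤ (1 : EReal) →
          x 1 ≤ C / r ^ 4 := by
  obtain ⟨N, hN⟩ := pow_unbounded_of_one_lt (2 * c) one_lt_two
  refine ⟨2 ^ blowupExponent N 1, by positivity, fun r hr0 hr1 x hx hrec hlimsup => ?_⟩
  have hr4 : 0 < r ^ 4 := by positivity
  have hlt : ∀ᶠ i in atTop, (r ^ 4 * x i) ^ ((3 / 4 : ℝ) ^ i) < 2 :=
    eventually_mul_rpow_lt_of_limsup_lt hr4.le (pow_le_one₀ hr0.le hr1.le) (fun i => by positivity)
      (eventually_atTop.2 ⟨1, hx⟩) (hlimsup.trans_lt (by exact_mod_cast one_lt_two))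
  have hbound := le_two_rpow_blowupExponent N.cast_nonneg (by rw [rpow_natCast]; exact hN.le)
    (y := fun i => r ^ 4 * x i) (fun i hi => mul_nonneg hr4.le (hx i hi))
    (fun i hi => mul_le_add_mul_rpow_of_le_add_div hr0 (hx _ (by omega)) (hrec i hi)) hlt.frequently
  rw [le_div_iff₀ hr4]
  linarith

theorem iteration_lemma (c : ℝ) (hc : 0 < c) :
    ∃ C : ℝ, 0 < C ∧
      ∀ (r : ℝ), 0 < r → r < 1 →
        ∀ (x : ℕ → ℝ), (∀ i, 1 ≤ i → 0 ≤ x i) →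
          (∀ i, 1 ≤ i →
            x i ≤ c * 16 ^ i / r ^ 4 + c * 2 ^ i / r * x (i + 1) ^ ((3:ℝ)/4)) →
          Filter.limsup (fun i : ℕ => ((x i ^ (((3:ℝ)/4) ^ i) : ℝ) : EReal)) Filter.atTop
              ≤ (1 : EReal) →
          x 1 ≤ C / r ^ 4 :=
  iteration_lemma_general c
end
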